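/- arXiv:1611.00291 — 4 statements merged into one kernel-verified Lean document; each statement's English description precedes it below -/
import Mathlib

section
/- Bayesian filter preserves MLR dominance: let P be an S×S TP2 stochastic matrix and B(·,y) likelihoods with the kernel B TP2. For a probability vector π define the updated belief T(π,y)(j) = B(j,y)(P'π)(j) / σ(π,y) where σ(π,y) = ∑ⱼ B(j,y)(P'π)(j) > 0. If π₁ ≥ᵣ π₂ (MLR), then T(π₁,y) ≥ᵣ T(π₂,y) for every observation y with σ(πᵢ,y) > 0. -/
/-- MLR dominance: π₁ ≥ᵣ π₂ iff for all i < j, π₁(j)π₂(i) ≤ π₂(j)π₁(i). -/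
def MlrGe {S : ℕ} (π₁ π₂ : Fin S → ℝ) : Prop :=
  ∀ i j : Fin S, i < j → π₁ j * π₂ i ≤ π₂ j * π₁ i

/-- Predicted belief (P'π)(j) = ∑ᵢ P(i,j)π(i). -/
def pred {S : ℕ} (P : Matrix (Fin S) (Fin S) ℝ) (π : Fin S → ℝ) (j : Fin S) : ℝ :=
  ∑ i, P i j * π i

/-- Normalization constant σ(π,y) = ∑ⱼ B(j,y)(P'π)(j). -/
def sigmaNorm {S : ℕ} (P : Matrix (Fin S) (Fin S) ℝ) (B : Fin S → ℕ → ℝ)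
    (π : Fin S → ℝ) (y : ℕ) : ℝ :=
  ∑ j, B j y * pred P π j

/-- Bayesian filter update T(π,y)(j) = B(j,y)(P'π)(j)/σ(π,y). -/
noncomputable def filterUpd {S : ℕ} (P : Matrix (Fin S) (Fin S) ℝ) (B : Fin S → ℕ → ℝ)
    (π : Fin S → ℝ) (y : ℕ) (j : Fin S) : ℝ :=
  B j y * pred P π j / sigmaNorm P B π y

/-- the Bayesian filter preserves MLR dominance when the
transition matrix P is TP2 stochastic and the observation kernel B is TP2. -/
theorem filter_preserves_mlr (S : ℕ)
    (P : Matrix (Fin S) (Fin S) ℝ) (B : Fin S → ℕ → ℝ)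
    (hP0 : ∀ i j, 0 ≤ P i j) (hProw : ∀ i, ∑ j, P i j = 1)
    (hPTP2 : ∀ i₁ i₂ : Fin S, i₁ < i₂ → ∀ j₁ j₂ : Fin S, j₁ < j₂ →
      P i₁ j₂ * P i₂ j₁ ≤ P i₁ j₁ * P i₂ j₂)
    (hB0 : ∀ i y, 0 ≤ B i y)
    (hBTP2 : ∀ i₁ i₂ : Fin S, i₁ < i₂ → ∀ y₁ y₂ : ℕ, y₁ < y₂ →
      B i₁ y₂ * B i₂ y₁ ≤ B i₁ y₁ * B i₂ y₂)
    (π₁ π₂ : Fin S → ℝ)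
    (h1 : ∀ i, 0 ≤ π₁ i) (h1s : ∑ i, π₁ i = 1)
    (h2 : ∀ i, 0 ≤ π₂ i) (h2s : ∑ i, π₂ i = 1)
    (hmlr : MlrGe π₁ π₂) :
    ∀ y : ℕ, 0 < sigmaNorm P B π₁ y → 0 < sigmaNorm P B π₂ y →
      MlrGe (filterUpd P B π₁ y) (filterUpd P B π₂ y) := by
  intro y hs1 hs2 i j hij
  -- key: pred preserves MLR
  have hpred : pred P π₁ j * pred P π₂ i ≤ pred P π₂ j * pred P π₁ i := by
    rw [← sub_nonneg]
    unfold pred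
    rw [Finset.sum_mul_sum, Finset.sum_mul_sum, ← Finset.sum_sub_distrib]
    simp_rw [← Finset.sum_sub_distrib]
    set F : Fin S → Fin S → ℝ := fun a b =>
      P a j * π₂ a * (P b i * π₁ b) - P a j * π₁ a * (P b i * π₂ b) with hF
    have hswap : (∑ a, ∑ b, F a b) = ∑ a, ∑ b, F b a := Finset.sum_comm
    have hG : ∀ a b : Fin S, 0 ≤ F a b + F b a := by
      intro a b
      rcases lt_trichotomy a b with hab | hab | hab
      · have h1' := hPTP2 a b hab i j hij
        have h2' := hmlr a b hab
        have hx : (0:ℝ) ≤ P b j * P a i - P a j * P b i := by nlinarith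
        have hy : (0:ℝ) ≤ π₁ a * π₂ b - π₂ a * π₁ b := by nlinarith
        have heq : F a b + F b a =
            (P b j * P a i - P a j * P b i) * (π₁ a * π₂ b - π₂ a * π₁ b) := by
          simp only [hF]; ring
        rw [heq]; exact mul_nonneg hx hy
      · subst hab
        have heq : F a a + F a a = 0 := by simp only [hF]; ring
        linarith
      · have h1' := hPTP2 b a hab i j hij
        have h2' := hmlr b a hab
        have hx : (0:ℝ) ≤ P a j * P b i - P b j * P a i := by nlinarith
        have hy : (0:ℝ) ≤ π₂ a * π₁ b - π₁ a * π₂ b := by nlinarith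
        have heq : F a b + F b a =
            (P a j * P b i - P b j * P a i) * (π₂ a * π₁ b - π₁ a * π₂ b) := by
          simp only [hF]; ring
        rw [heq]; exact mul_nonneg hx hy
    have h2S : 0 ≤ (∑ a, ∑ b, F a b) + ∑ a, ∑ b, F b a := by
      rw [← Finset.sum_add_distrib]
      refine Finset.sum_nonneg fun a _ => ?_
      rw [← Finset.sum_add_distrib]
      exact Finset.sum_nonneg fun b _ => hG a b
    linarith [hswap ▸ h2S]
  have hp1 : ∀ k, 0 ≤ pred P π₁ k := fun k =>
    Finset.sum_nonneg fun a _ => mul_nonneg (hP0 a k) (h1 a)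
  have hp2 : ∀ k, 0 ≤ pred P π₂ k := fun k =>
    Finset.sum_nonneg fun a _ => mul_nonneg (hP0 a k) (h2 a)
  unfold filterUpd
  rw [div_mul_div_comm, div_mul_div_comm, mul_comm (sigmaNorm P B π₂ y)]
  apply div_le_div_of_nonneg_right ?_ (by positivity)
  have hBij : 0 ≤ B j y * B i y := mul_nonneg (hB0 j y) (hB0 i y)
  nlinarith [mul_le_mul_of_nonneg_left hpred hBij]
end

section
/- If P is a TP2 stochastic matrix and π₁ ≥ᵣ π₂ in MLR order, then the predicted beliefs satisfy P'π₁ ≥ᵣ P'π₂. -/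
/-- if P is a TP2 stochastic matrix and π₁ ≥ᵣ π₂ in MLR order,
then the predicted beliefs satisfy P'π₁ ≥ᵣ P'π₂. -/
theorem predictor_preserves_mlr (S : ℕ)
    (P : Matrix (Fin S) (Fin S) ℝ)
    (hP0 : ∀ i j, 0 ≤ P i j) (hProw : ∀ i, ∑ j, P i j = 1)
    (hPTP2 : ∀ i₁ i₂ : Fin S, i₁ < i₂ → ∀ j₁ j₂ : Fin S, j₁ < j₂ →
      P i₁ j₂ * P i₂ j₁ ≤ P i₁ j₁ * P i₂ j₂)
    (π₁ π₂ : Fin S → ℝ)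
    (h1 : ∀ i, 0 ≤ π₁ i) (h1s : ∑ i, π₁ i = 1)
    (h2 : ∀ i, 0 ≤ π₂ i) (h2s : ∑ i, π₂ i = 1)
    (hmlr : MlrGe π₁ π₂) :
    MlrGe (pred P π₁) (pred P π₂) := by
  intro i j hij
  have key : ∀ a b : Fin S,
      0 ≤ (P a j * P b i - P b j * P a i) * (π₂ a * π₁ b - π₁ a * π₂ b) := by
    intro a b
    rcases lt_trichotomy a b with hab | hab | hab
    · have hT := hPTP2 a b hab i j hij
      have hM := hmlr a b hab
      have f1 : P a j * P b i - P b j * P a i ≤ 0 := by nlinarith [hT]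
      have f2 : π₂ a * π₁ b - π₁ a * π₂ b ≤ 0 := by nlinarith [hM]
      nlinarith [f1, f2, mul_nonneg (neg_nonneg.mpr f1) (neg_nonneg.mpr f2)]
    · subst hab; ring_nf; simp
    · have hT := hPTP2 b a hab i j hij
      have hM := hmlr b a hab
      have f1 : 0 ≤ P a j * P b i - P b j * P a i := by nlinarith [hT]
      have f2 : 0 ≤ π₂ a * π₁ b - π₁ a * π₂ b := by nlinarith [hM]
      exact mul_nonneg f1 f2
  have hsum : 0 ≤ ∑ a : Fin S, ∑ b : Fin S,
      (P a j * P b i - P b j * P a i) * (π₂ a * π₁ b - π₁ a * π₂ b) :=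
    Finset.sum_nonneg fun a _ => Finset.sum_nonneg fun b _ => key a b
  have hexp : ∑ a : Fin S, ∑ b : Fin S,
      (P a j * P b i - P b j * P a i) * (π₂ a * π₁ b - π₁ a * π₂ b)
      = 2 * ((∑ a, P a j * π₂ a) * (∑ b, P b i * π₁ b)
             - (∑ a, P a j * π₁ a) * (∑ b, P b i * π₂ b)) := by
    have e : ∀ a b : Fin S,
        (P a j * P b i - P b j * P a i) * (π₂ a * π₁ b - π₁ a * π₂ b)
        = (P a j * π₂ a) * (P b i * π₁ b) - (P a j * π₁ a) * (P b i * π₂ b)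
          - (P a i * π₂ a) * (P b j * π₁ b) + (P a i * π₁ a) * (P b j * π₂ b) := by
      intro a b; ring
    simp only [e, Finset.sum_sub_distrib, Finset.sum_add_distrib,
      ← Finset.sum_mul_sum]
    ring
  unfold pred
  nlinarith [hsum, hexp]
end

section
/- In the multiple stopping value iteration, if W_{k-1}(π, l) ≥ W_{k-1}(π, l−1) for all beliefs π and all l, and the stopping sets at step k satisfy S_k^{l−1} ⊆ S_k^l with the recursion W_k(π,l) given piecewise on C_k^l, C_k^{l−1} ∩ S_k^l, and S_k^{l−1} by (ρ∑_y W_{k−1}(T(π,y),l)σ(π,y)), (r'π), and (ρ∑_y W_{k−1}(T(π,y),l−1)σ(π,y)) respectively, then W_k(π,l) ≥ W_k(π,l−1) for all π and l. -/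
/-- one step of the multiple-stopping value iteration preserves
monotonicity of W in the number of remaining stops l.  If W_{k−1}(π,l) is
nondecreasing in l, the stopping sets S_k^l are nested, and W_k is given by
the piecewise recursion on C_k^l, C_k^{l−1} ∩ S_k^l and S_k^{l−1}, then
W_k(π,l) ≥ W_k(π,l−1) for all π and l. -/
theorem value_iteration_W_monotone
    (Belief : Type*) (Y : Type*) [Fintype Y]
    (Wprev Wcur : Belief → ℤ → ℝ)
    (T : Belief → Y → Belief) (σ : Belief → Y → ℝ) (R : Belief → ℝ) (ρ : ℝ)
    (hρ0 : 0 < ρ) (hρ1 : ρ ≤ 1)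
    (hσ0 : ∀ π y, 0 ≤ σ π y) (hσ1 : ∀ π, ∑ y, σ π y = 1)
    (Sk : ℤ → Set Belief)
    (hSk : ∀ l, Sk l = {π | ρ * ∑ y, Wprev (T π y) l * σ π y ≤ R π})
    (hWprevMono : ∀ π l, Wprev π (l - 1) ≤ Wprev π l)
    (hnested : ∀ l, Sk (l - 1) ⊆ Sk l)
    (hrecC : ∀ π l, π ∉ Sk l →
      Wcur π l = ρ * ∑ y, Wprev (T π y) l * σ π y)
    (hrecM : ∀ π l, π ∈ Sk l → π ∉ Sk (l - 1) → Wcur π l = R π)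
    (hrecS : ∀ π l, π ∈ Sk (l - 1) →
      Wcur π l = ρ * ∑ y, Wprev (T π y) (l - 1) * σ π y) :
    ∀ π l, Wcur π (l - 1) ≤ Wcur π l := by
  intro π l
  have Qmono : ∀ m : ℤ, ρ * ∑ y, Wprev (T π y) (m - 1) * σ π y ≤
      ρ * ∑ y, Wprev (T π y) m * σ π y := by
    intro m
    refine mul_le_mul_of_nonneg_left ?_ hρ0.le
    refine Finset.sum_le_sum fun y _ => ?_
    exact mul_le_mul_of_nonneg_right (hWprevMono _ _) (hσ0 π y)
  by_cases h2 : π ∈ Sk (l - 1)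
  · have h2' : π ∈ Sk (l - 1 - 1) := by
      simp only [hSk, Set.mem_setOf_eq] at h2 ⊢
      exact le_trans (Qmono (l - 1)) h2
    rw [hrecS π l h2, hrecS π (l - 1) h2']
    exact Qmono (l - 1)
  · by_cases h1 : π ∈ Sk l
    · exfalso
      apply h2
      simp only [hSk, Set.mem_setOf_eq] at h1 ⊢
      exact le_trans (Qmono l) h1
    · rw [hrecC π l h1, hrecC π (l - 1) h2]
      exact Qmono l
end

section
/- Let f : Π → ℝ be MLR-decreasing on every line L(e₁, π̄) and L(e_S, π̄). If the stopping region S = {π : f(π) ≤ 0} contains e₁ and the continuation region C = {π : f(π) > 0} contains e_S, then both S and C are connected subsets of the simplex (in the standard topology), since any line segment from e₁ crosses from S to C at most once and any segment from e_S crosses from C to S at most once. -/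
/-- The probability simplex on {1,…,S} (S = n+1 states, 0-indexed). -/
def probSimplex (n : ℕ) : Set (Fin (n+1) → ℝ) :=
  {π | (∀ i, 0 ≤ π i) ∧ ∑ i, π i = 1}

/-- Point (1−γ)π̄ + γe, for a vertex e of the simplex. -/
def segPt {n : ℕ} (e πbar : Fin (n+1) → ℝ) (γ : ℝ) (i : Fin (n+1)) : ℝ :=
  (1 - γ) * πbar i + γ * e i

/-- Unit vector e₁ (state 1, index 0). -/
def e1 (n : ℕ) : Fin (n+1) → ℝ := fun i => if i = 0 then 1 else 0

/-- Unit vector e_S (last state). -/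
def eS (n : ℕ) : Fin (n+1) → ℝ := fun i => if i = Fin.last n then 1 else 0

lemma unitVec_mem (n : ℕ) (idx : Fin (n+1)) :
    (fun i => if i = idx then (1:ℝ) else 0) ∈ probSimplex n := by
  constructor
  · intro i; dsimp; split <;> norm_num
  · simp

lemma seg_mem_simplex (n : ℕ) (idx : Fin (n+1)) {π : Fin (n+1) → ℝ}
    (hπ : π ∈ probSimplex n) {t : ℝ} (ht : t ∈ Set.Icc (0:ℝ) 1) :
    segPt (fun i => if i = idx then (1:ℝ) else 0) π t ∈ probSimplex n := by
  obtain ⟨hpos, hsum⟩ := hπ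
  obtain ⟨ht0, ht1⟩ := ht
  constructor
  · intro i
    unfold segPt
    have := hpos i
    have : (0:ℝ) ≤ t * (if i = idx then (1:ℝ) else 0) := by positivity
    nlinarith [hpos i]
  · unfold segPt
    rw [Finset.sum_add_distrib, ← Finset.mul_sum, ← Finset.mul_sum, hsum]
    simp

/-- key: moving toward the vertex decreases f -/
lemma seg_f_le (n : ℕ) (f : (Fin (n+1) → ℝ) → ℝ) (idx : Fin (n+1))
    (hdec : ∀ πbar ∈ probSimplex n, πbar idx = 0 →
      ∀ γ₁ γ₂ : ℝ, 0 ≤ γ₂ → γ₂ ≤ γ₁ → γ₁ ≤ 1 →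
        f (segPt (fun i => if i = idx then (1:ℝ) else 0) πbar γ₁) ≤
        f (segPt (fun i => if i = idx then (1:ℝ) else 0) πbar γ₂))
    {π : Fin (n+1) → ℝ} (hπ : π ∈ probSimplex n) {t : ℝ} (ht : t ∈ Set.Icc (0:ℝ) 1) :
    f (segPt (fun i => if i = idx then (1:ℝ) else 0) π t) ≤ f π := by
  obtain ⟨hpos, hsum⟩ := hπ
  obtain ⟨ht0, ht1⟩ := ht
  set e : Fin (n+1) → ℝ := fun i => if i = idx then (1:ℝ) else 0 with he
  set c := π idx with hc
  have hc1 : c ≤ 1 := by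
    rw [hc, ← hsum]
    exact Finset.single_le_sum (fun i _ => hpos i) (Finset.mem_univ idx)
  rcases eq_or_lt_of_le hc1 with heq | hlt
  · -- π = e
    have hπe : π = e := by
      funext i
      by_cases hi : i = idx
      · simp [he, hi, ← heq, hc]
      · simp only [he, hi, if_neg hi]
        have hz : ∑ j ∈ Finset.univ.erase idx, π j = 0 := by
          have := Finset.add_sum_erase Finset.univ π (Finset.mem_univ idx)
          rw [hsum] at this
          linarith [this, heq]
        have := (Finset.sum_eq_zero_iff_of_nonneg
          (fun j _ => hpos j)).mp hz i (by simp [hi])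
        exact this
      -- done
    have hee : segPt e e t = e := by
      funext i; unfold segPt; ring
    rw [hπe, hee]
  · -- c < 1
    have h1c : (0:ℝ) < 1 - c := by linarith
    set πbar : Fin (n+1) → ℝ := fun i => (π i - c * e i) / (1 - c) with hbar
    have hbarmem : πbar ∈ probSimplex n := by
      constructor
      · intro i
        by_cases hi : i = idx
        · simp [hbar, hi, he, hc]
        · have hei : e i = 0 := by simp [he, hi]
          simp only [hbar, hei, mul_zero, sub_zero]
          exact div_nonneg (hpos i) h1c.le
      · simp only [hbar]
        rw [← Finset.sum_div]
        rw [Finset.sum_sub_distrib, hsum, ← Finset.mul_sum]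
        simp only [he]
        rw [Finset.sum_ite_eq' Finset.univ idx (fun _ => (1:ℝ))]
        simp [h1c.ne']
    have hbar0 : πbar idx = 0 := by simp [hbar, he, hc]
    have key := hdec πbar hbarmem hbar0 (c + t * (1 - c)) c (hpos idx)
      (by nlinarith) (by nlinarith)
    have e2 : segPt e πbar c = π := by
      funext i; unfold segPt; simp only [hbar]; field_simp; try ring
    have e1' : segPt e πbar (c + t * (1 - c)) = segPt e π t := by
      funext i; unfold segPt; simp only [hbar]; field_simp; try ring
    rw [e2, e1'] at key
    exact key

/-- star-shaped sets are path connected hence connected -/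
lemma star_connected {n : ℕ} (e : Fin (n+1) → ℝ) (s : Set (Fin (n+1) → ℝ))
    (he : e ∈ s)
    (hstar : ∀ π ∈ s, ∀ t ∈ Set.Icc (0:ℝ) 1, segPt e π t ∈ s) :
    IsConnected s := by
  have hpc : IsPathConnected s := by
    refine ⟨e, he, ?_⟩
    intro y hy
    have hcont : Continuous fun t : ℝ => segPt e y (1 - t) := by
      unfold segPt
      exact continuous_pi fun i => by fun_prop
    refine ⟨⟨⟨fun t => segPt e y (1 - t.1), hcont.comp continuous_subtype_val⟩, ?_, ?_⟩, ?_⟩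
    · show segPt e y (1 - 0) = e
      funext i; unfold segPt; ring
    · show segPt e y (1 - 1) = y
      funext i; unfold segPt; ring
    · intro t
      exact hstar y hy (1 - t.1) ⟨by linarith [t.2.2], by linarith [t.2.1]⟩
  exact hpc.isConnected

/-- if f is MLR-decreasing along every line L(e₁,π̄)
(nonincreasing in γ toward e₁) and along every line L(e_S,π̄)
(nondecreasing in γ toward e_S), with e₁ in the stopping region
S = {f ≤ 0} and e_S in the continuation region C = {f > 0}, then both
regions are connected subsets of the simplex. -/
theorem stopping_continuation_connected (n : ℕ) (f : (Fin (n+1) → ℝ) → ℝ)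
    (hdec1 : ∀ πbar ∈ probSimplex n, πbar 0 = 0 →
      ∀ γ₁ γ₂ : ℝ, 0 ≤ γ₂ → γ₂ ≤ γ₁ → γ₁ ≤ 1 →
        f (segPt (e1 n) πbar γ₁) ≤ f (segPt (e1 n) πbar γ₂))
    (hdec2 : ∀ πbar ∈ probSimplex n, πbar (Fin.last n) = 0 →
      ∀ γ₁ γ₂ : ℝ, 0 ≤ γ₂ → γ₂ ≤ γ₁ → γ₁ ≤ 1 →
        f (segPt (eS n) πbar γ₂) ≤ f (segPt (eS n) πbar γ₁))
    (he1 : f (e1 n) ≤ 0) (heS : 0 < f (eS n)) :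
    IsConnected {π ∈ probSimplex n | f π ≤ 0} ∧
    IsConnected {π ∈ probSimplex n | 0 < f π} := by
  have he1eq : e1 n = fun i : Fin (n+1) => if i = 0 then (1:ℝ) else 0 := rfl
  have heSeq : eS n = fun i : Fin (n+1) => if i = Fin.last n then (1:ℝ) else 0 := rfl
  constructor
  · refine star_connected (e1 n) _ ⟨unitVec_mem n 0, he1⟩ ?_
    rintro π ⟨hπ, hfπ⟩ t ht
    refine ⟨seg_mem_simplex n 0 hπ ht, ?_⟩
    calc f (segPt (e1 n) π t) ≤ f π := seg_f_le n f 0 hdec1 hπ ht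
      _ ≤ 0 := hfπ
  · refine star_connected (eS n) _ ⟨unitVec_mem n (Fin.last n), heS⟩ ?_
    rintro π ⟨hπ, hfπ⟩ t ht
    refine ⟨seg_mem_simplex n (Fin.last n) hπ ht, ?_⟩
    have := seg_f_le n (fun x => -f x) (Fin.last n)
      (fun πbar hm h0 γ₁ γ₂ h1 h2 h3 => neg_le_neg (hdec2 πbar hm h0 γ₁ γ₂ h1 h2 h3)) hπ ht
    simp only [neg_le_neg_iff] at this
    show 0 < f (segPt (eS n) π t)
    rw [heSeq]
    exact hfπ.trans_le this
end
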